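/- Let Z be a measurable space with measure ν, S a compact metric space, and z ↦ μ_z a ν-measurable assignment of Borel probability measures on S (i.e., z ↦ μ_z(f) is measurable for each continuous f : S → ℝ). Then the assignment z ↦ Supp(μ_z) ∈ 𝓒(S) is ν-measurable with respect to the Borel σ-algebra of the Hausdorff topology on the hyperspace 𝓒(S) of nonempty closed subsets. -/

import Mathlib

/-!
An open set `U` meets the support of `μ_z` iff `μ_z U ≠ 0`, since the complement of the support
is a countable union of open null sets. So it suffices that `z ↦ μ_z` is measurable. The closed
sets form a π-system generating the Borel σ-algebra, and on a closed set `F` the measure `μ_z F`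
is the limit of the integrals of continuous functions decreasing to the indicator of `F`.
-/

open MeasureTheory

/-- The (closed) support of a measure on a topological space: the set of points all
of whose open neighbourhoods have positive measure. -/
def measSupport {S : Type*} [TopologicalSpace S] [MeasurableSpace S]
    (μ : Measure S) : Set S :=
  {x | ∀ U : Set S, IsOpen U → x ∈ U → μ U ≠ 0}

open BoundedContinuousFunction
open scoped NNReal

lemma measSupport_eq_support {S : Type*} [TopologicalSpace S] [MeasurableSpace S]
    (μ : Measure S) : measSupport μ = μ.support := by
  ext x
  simp only [measSupport, Measure.support_eq_forall_isOpen, pos_iff_ne_zero, Set.mem_ofPred_eq]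
  exact forall_congr' fun _ ↦ forall_comm

lemma measSupport_inter_nonempty_iff {S : Type*} [TopologicalSpace S]
    [HereditarilyLindelofSpace S] [MeasurableSpace S] (μ : Measure S) {U : Set S} (hU : IsOpen U) :
    (measSupport μ ∩ U).Nonempty ↔ μ U ≠ 0 := by
  refine ⟨fun ⟨x, hx, hxU⟩ ↦ hx U hU hxU, fun hμU ↦ ?_⟩
  rw [measSupport_eq_support, Set.inter_comm]
  exact Measure.nonempty_inter_support_of_pos (pos_iff_ne_zero.2 hμU)

section

variable {Z S : Type*} [MeasurableSpace Z] [TopologicalSpace S] [MeasurableSpace S]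
  [OpensMeasurableSpace S] {μ : Z → Measure S} [∀ z, IsFiniteMeasure (μ z)]

lemma measurable_lintegral_of_forall_measurable_integral
    (h : ∀ f : S →ᵇ ℝ, Measurable fun z ↦ ∫ x, f x ∂μ z) (g : S →ᵇ ℝ≥0) :
    Measurable fun z ↦ ∫⁻ x, g x ∂μ z := by
  have hg : ∀ z, ∫⁻ x, g x ∂μ z = ENNReal.ofReal (∫ x, (g x : ℝ) ∂μ z) := fun z ↦ by
    rw [← toReal_lintegral_coe_eq_integral,
      ENNReal.ofReal_toReal (lintegral_lt_top_of_nnreal _ g).ne]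
  simp_rw [hg]
  exact ENNReal.measurable_ofReal.comp (h (g.comp _ NNReal.isometry_coe.lipschitz))

theorem Measurable.measure_of_forall_measurable_integral [HasOuterApproxClosed S] [BorelSpace S]
    (h : ∀ f : S →ᵇ ℝ, Measurable fun z ↦ ∫ x, f x ∂μ z) : Measurable μ := by
  have h_closed : ∀ F : Set S, IsClosed F → Measurable fun z ↦ μ z F := fun F hF ↦
    measurable_of_tendsto_metrizable
      (fun n ↦ measurable_lintegral_of_forall_measurable_integral h (hF.apprSeq n))
      (tendsto_pi_nhds.2 fun z ↦ HasOuterApproxClosed.tendsto_lintegral_apprSeq hF (μ z))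
  exact .measure_of_isPiSystem (BorelSpace.measurable_eq.trans borel_eq_generateFrom_isClosed)
    isPiSystem_isClosed h_closed (h_closed _ isClosed_univ)

end

theorem stmt11_general {Z S : Type*} [MeasurableSpace Z] [MetricSpace S] [CompactSpace S]
    [MeasurableSpace S] [BorelSpace S]
    (μ : Z → Measure S) (hprob : ∀ z, IsProbabilityMeasure (μ z))
    (hmeas : ∀ f : C(S, ℝ), Measurable fun z => ∫ ξ, f ξ ∂(μ z)) :
    ∀ U : Set S, IsOpen U →
      MeasurableSet {z : Z | (measSupport (μ z) ∩ U).Nonempty} := by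
  intro U hU
  have hμ : Measurable μ := .measure_of_forall_measurable_integral fun f ↦ hmeas f.toContinuousMap
  simp_rw [measSupport_inter_nonempty_iff _ hU]
  exact (Measure.measurable_coe hU.measurableSet |>.comp hμ) (measurableSet_singleton 0).compl

/-- Lemma 18 in abstract form: if `z ↦ μ_z` is a measurable family of probability
measures on a compact metric space `S`, then `z ↦ Supp(μ_z)` is measurable, i.e.
`{z : Supp(μ_z) ∩ U ≠ ∅}` is measurable for every open `U`. -/
theorem stmt11 {Z S : Type*} [MeasurableSpace Z] [MetricSpace S] [CompactSpace S]
    [MeasurableSpace S] [BorelSpace S]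
    (ν : Measure Z)
    (μ : Z → Measure S) (hprob : ∀ z, IsProbabilityMeasure (μ z))
    (hmeas : ∀ f : C(S, ℝ), Measurable fun z => ∫ ξ, f ξ ∂(μ z)) :
    ∀ U : Set S, IsOpen U →
      MeasurableSet {z : Z | (measSupport (μ z) ∩ U).Nonempty} :=
  stmt11_general μ hprob hmeas
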